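/- arXiv:1606.04205 — 2 statements merged into one kernel-verified Lean document; each statement's English description precedes it below -/
import Mathlib

section
/- With the update rules Q(t+1) = (Q(t) − μ_out(t))^+ + μ_in(t) and q(t+1) = q(t) − μ_out(t) + μ_in(t), both starting at 0, and with 0 ≤ μ_out(t) ≤ B for all t, we have 0 ≤ Q(t) − q(t) ≤ B · N(t) for all t, where N(t) = Σ_{τ<t} 1{Q(τ) < μ_out(τ)} counts the underflow ('null activity') events up to time t. -/
/-!
Subtracting the two recursions, the gap `Q − q` grows at step `τ` by exactly
`(Q τ − μout τ)⁺ − (Q τ − μout τ) = (μout τ − Q τ)⁺`, so it is the sum of these overshoots.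
Each overshoot is nonnegative, vanishes unless `Q τ < μout τ`, and is at most
`μout τ ≤ B` because the reflected queue `Q` stays nonnegative.
-/

section ReflectedQueue

variable {α : Type*} [AddCommGroup α] [LinearOrder α] [IsOrderedAddMonoid α]

theorem max_sub_zero_sub_sub (a b : α) : max (a - b) 0 - (a - b) = max (b - a) 0 := by
  have h := max_zero_sub_eq_self (a - b)
  rw [neg_sub] at h
  rw [sub_eq_iff_eq_add, add_comm, ← sub_eq_iff_eq_add, h]

theorem reflected_queue_nonneg {Q μout μin : ℕ → α} (hQ0 : 0 ≤ Q 0) (hin : ∀ t, 0 ≤ μin t)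
    (hQ : ∀ t, Q (t + 1) = max (Q t - μout t) 0 + μin t) (t : ℕ) : 0 ≤ Q t := by
  cases t with
  | zero => exact hQ0
  | succ n => rw [hQ n]; exact add_nonneg (le_max_right _ _) (hin n)

theorem reflected_sub_free_eq_sum_overshoot {Q q μout μin : ℕ → α}
    (hQ : ∀ t, Q (t + 1) = max (Q t - μout t) 0 + μin t)
    (hq : ∀ t, q (t + 1) = q t - μout t + μin t) (t : ℕ) :
    Q t - q t = Q 0 - q 0 + ∑ τ ∈ Finset.range t, max (μout τ - Q τ) 0 := by
  have hstep : ∀ τ, (Q (τ + 1) - q (τ + 1)) - (Q τ - q τ) = max (μout τ - Q τ) 0 := by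
    intro τ
    rw [hQ τ, hq τ, ← max_sub_zero_sub_sub]
    abel
  rw [← Finset.sum_congr rfl fun τ _ => hstep τ, Finset.sum_range_sub (fun τ => Q τ - q τ)]
  abel

end ReflectedQueue

theorem max_sub_zero_le_mul_ite {R : Type*} [Ring R] [LinearOrder R] [IsStrictOrderedRing R]
    {a b B : R} (ha : 0 ≤ a) (hb : b ≤ B) :
    max (b - a) 0 ≤ B * if a < b then 1 else 0 := by
  split_ifs with h
  · rw [mul_one, max_le_iff, sub_le_iff_le_add]
    exact ⟨le_add_of_le_of_nonneg hb ha, (ha.trans h.le).trans hb⟩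
  · rw [mul_zero, max_le_iff, sub_nonpos]
    exact ⟨not_lt.mp h, le_rfl⟩

theorem underflow_gap_bound_general (B : ℝ) (μout μin : ℕ → ℝ)
    (houtB : ∀ t, μout t ≤ B) (hin : ∀ t, 0 ≤ μin t)
    (Q q : ℕ → ℝ) (hQ0 : Q 0 = 0) (hq0 : q 0 = 0)
    (hQ : ∀ t, Q (t + 1) = max (Q t - μout t) 0 + μin t)
    (hq : ∀ t, q (t + 1) = q t - μout t + μin t) :
    ∀ t, 0 ≤ Q t - q t ∧
      Q t - q t ≤ B * (∑ τ ∈ Finset.range t, if Q τ < μout τ then (1 : ℝ) else 0) := by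
  intro t
  rw [reflected_sub_free_eq_sum_overshoot hQ hq, hQ0, hq0, sub_zero, zero_add, Finset.mul_sum]
  have hQnn := reflected_queue_nonneg hQ0.ge hin hQ
  exact ⟨Finset.sum_nonneg fun τ _ => le_max_right _ _,
    Finset.sum_le_sum fun τ _ => max_sub_zero_le_mul_ite (hQnn τ) (houtB τ)⟩

/-- With `Q(t+1) = (Q(t) − μout(t))⁺ + μin(t)` and `q(t+1) = q(t) − μout(t) + μin(t)`,
both starting at 0, and `0 ≤ μout(t) ≤ B`, we have
`0 ≤ Q(t) − q(t) ≤ B · N(t)` where `N(t)` counts the null-activity (underflow) events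
`Q(τ) < μout(τ)` for `τ < t`. -/
theorem underflow_gap_bound (B : ℝ) (hB : 0 < B) (μout μin : ℕ → ℝ)
    (hout : ∀ t, 0 ≤ μout t) (houtB : ∀ t, μout t ≤ B) (hin : ∀ t, 0 ≤ μin t)
    (Q q : ℕ → ℝ) (hQ0 : Q 0 = 0) (hq0 : q 0 = 0)
    (hQ : ∀ t, Q (t + 1) = max (Q t - μout t) 0 + μin t)
    (hq : ∀ t, q (t + 1) = q t - μout t + μin t) :
    ∀ t, 0 ≤ Q t - q t ∧
      Q t - q t ≤ B * (∑ τ ∈ Finset.range t, if Q τ < μout τ then (1 : ℝ) else 0) :=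
  underflow_gap_bound_general B μout μin houtB hin Q q hQ0 hq0 hQ hq
end

section
/- For the two-state time-varying channel with cq(t) uniform on {1,2}, p^(1) = (0, 0.5, 0.5, 0) and p^(2) = (0, 0, 0, 1), the symmetric sum-rate achievable by the 7-operation scheme's flow-conservation LP equals 1 packet/slot, while any pure-routing (uncoded) scheme achieves symmetric sum-rate at most 0.75 packets/slot. -/
section aux
variable {α : Type*}
@[local simp] lemma vec7_app0 (a b c d e f g : α) : ![a,b,c,d,e,f,g] 0 = a := rfl
@[local simp] lemma vec7_app1 (a b c d e f g : α) : ![a,b,c,d,e,f,g] 1 = b := rfl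
@[local simp] lemma vec7_app2 (a b c d e f g : α) : ![a,b,c,d,e,f,g] 2 = c := rfl
@[local simp] lemma vec7_app3 (a b c d e f g : α) : ![a,b,c,d,e,f,g] 3 = d := rfl
@[local simp] lemma vec7_app4 (a b c d e f g : α) : ![a,b,c,d,e,f,g] 4 = e := rfl
@[local simp] lemma vec7_app5 (a b c d e f g : α) : ![a,b,c,d,e,f,g] 5 = f := rfl
@[local simp] lemma vec7_app6 (a b c d e f g : α) : ![a,b,c,d,e,f,g] 6 = g := rfl
@[local simp] lemma vec5_app0 (a b c d e : α) : ![a,b,c,d,e] 0 = a := rfl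
@[local simp] lemma vec5_app1 (a b c d e : α) : ![a,b,c,d,e] 1 = b := rfl
@[local simp] lemma vec5_app2 (a b c d e : α) : ![a,b,c,d,e] 2 = c := rfl
@[local simp] lemma vec5_app3 (a b c d e : α) : ![a,b,c,d,e] 3 = d := rfl
@[local simp] lemma vec5_app4 (a b c d e : α) : ![a,b,c,d,e] 4 = e := rfl
@[local simp] lemma vec2_app0 (a b : α) : ![a,b] 0 = a := rfl
@[local simp] lemma vec2_app1 (a b : α) : ![a,b] 1 = b := rfl
end aux

/-- For the two-state channel (`cq(t)` uniform on `{1,2}`, `p⁽¹⁾ = (0,0.5,0.5,0)`,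
`p⁽²⁾ = (0,0,0,1)`):

(1) Routing part: any pure-routing time-sharing `(s_c¹, s_c²)` with `s_c¹ + s_c² ≤ 1`
delivering equal rates `R1 = R2` has sum rate at most `0.75`.

(2) Coding part: the symmetric rate pair `(0.5, 0.5)` (sum rate 1 packet/slot) satisfies
the flow-conservation equalities of the 7-operation SPN (queues ordered
`[Q¹∅, Q²∅, Q¹{2}, Q²{1}, Qmix]`, SAs ordered `[NC1,NC2,DX1,DX2,PM,RC,CX]`, expected
service matrices from Table II) for some activation vectors `s₁, s₂ ∈ Λ = conv(𝔛)`. -/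
theorem two_state_capacity_example :
    (∀ s11 s12 s21 s22 R1 R2 : ℝ,
        0 ≤ s11 → 0 ≤ s12 → 0 ≤ s21 → 0 ≤ s22 →
        s11 + s12 ≤ 1 → s21 + s22 ≤ 1 →
        R1 = 0.5 * (s11 * 0.5) + 0.5 * (s21 * 1) →
        R2 = 0.5 * (s12 * 0.5) + 0.5 * (s22 * 1) →
        R1 = R2 → R1 + R2 ≤ 0.75) ∧
    (let A : Matrix (Fin 5) (Fin 2) ℝ := !![1,0; 0,1; 0,0; 0,0; 0,0]
     let Bin1 : Matrix (Fin 5) (Fin 7) ℝ :=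
       !![1,0,0,0,1,0,0; 0,1,0,0,1,0,0; 0,0,0.5,0,0,0,0.5; 0,0,0,0.5,0,0,0.5;
          0,0,0,0,0,1,0]
     let Bout1 : Matrix (Fin 5) (Fin 7) ℝ :=
       !![0,0,0,0,0,0,0; 0,0,0,0,0,0,0; 0.5,0,0,0,0,0.5,0; 0,0.5,0,0,0,0.5,0;
          0,0,0,0,1,0,0]
     let Bin2 : Matrix (Fin 5) (Fin 7) ℝ :=
       !![1,0,0,0,1,0,0; 0,1,0,0,1,0,0; 0,0,1,0,0,0,1; 0,0,0,1,0,0,1; 0,0,0,0,0,1,0]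
     let Bout2 : Matrix (Fin 5) (Fin 7) ℝ :=
       !![0,0,0,0,0,0,0; 0,0,0,0,0,0,0; 0,0,0,0,0,0,0; 0,0,0,0,0,0,0; 0,0,0,0,1,0,0]
     let X : Set (Fin 7 → ℝ) := insert 0 (Set.range fun n => Pi.single n (1 : ℝ))
     ∃ s1 s2 : Fin 7 → ℝ, s1 ∈ convexHull ℝ X ∧ s2 ∈ convexHull ℝ X ∧
       ∀ k, (A.mulVec ![0.5, 0.5]) k
           + 0.5 * (Bout1.mulVec s1) k + 0.5 * (Bout2.mulVec s2) k
         = 0.5 * (Bin1.mulVec s1) k + 0.5 * (Bin2.mulVec s2) k) := by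
  constructor
  · intro s11 s12 s21 s22 R1 R2 h11 h12 h21 h22 hs1 hs2 hR1 hR2 hEq
    nlinarith [mul_nonneg h11 h12, mul_nonneg h21 h22, sq_nonneg (s11 - s22)]
  · intro A Bin1 Bout1 Bin2 Bout2 X
    have h1 : (![0,0,0,0,1,0,0] : Fin 7 → ℝ) ∈ X := by
      refine Or.inr ⟨4, ?_⟩
      funext i; fin_cases i <;> simp [Pi.single_apply] <;> rfl
    have h2 : (![0,0,0,0,0,1,0] : Fin 7 → ℝ) ∈ X := by
      refine Or.inr ⟨5, ?_⟩
      funext i; fin_cases i <;> simp [Pi.single_apply] <;> rfl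
    refine ⟨![0,0,0,0,1,0,0], ![0,0,0,0,0,1,0],
      subset_convexHull ℝ X h1, subset_convexHull ℝ X h2, ?_⟩
    intro k
    fin_cases k <;>
      · simp only [A, Bin1, Bout1, Bin2, Bout2, Matrix.mulVec, dotProduct,
          Fin.sum_univ_seven, Fin.sum_univ_two, Matrix.cons_val', Matrix.of_apply,
          Matrix.cons_val_zero, Matrix.cons_val_one, Matrix.head_cons,
          vec7_app0, vec7_app1, vec7_app2, vec7_app3, vec7_app4, vec7_app5, vec7_app6,
          vec5_app0, vec5_app1, vec5_app2, vec5_app3, vec5_app4, vec2_app0, vec2_app1]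
        norm_num
end
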